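/- arXiv:1205.1575 — 9 statements merged into one kernel-verified Lean document; each statement's English description precedes it below -/
import Mathlib

section
/- Let 0 < α < 1/2, ρ ∈ [0,1], φ = αρπ, θ₁ = -φ/(1-α), and F(z) = z + e^{iφ} z^{1-α} (principal branch). Then for all r ≥ 0, Im F(r e^{iθ₁}) ≤ 0 and Im F(r e^{iθ₂}) ≤ 0, where θ₂ = (π-φ)/(1-α). -/
open Complex Real Set

/-!
Both summands of `F(r e^{iθ})` lie in the closed lower half-plane: the first has argument `θ`,
and the second has argument `φ + (1 - α) θ`, which equals `0` for `θ = θ₁` and `π` for `θ = θ₂`.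
It remains that `θ₁ ∈ [-π, 0]` and `θ₂ ∈ [π, 2π]`, which is where `α < 1/2` enters.
-/

/-- `Fray α φ θ r` is `F(r e^{iθ}) = r e^{iθ} + e^{iφ} r^{1-α} e^{i(1-α)θ}`, i.e. the value of
`F(z) = z + e^{iφ} z^{1-α}` on the half-line `l_θ`, with the branch
`(r e^{iθ})^{1-α} = r^{1-α} e^{i(1-α)θ}`. -/
noncomputable def Fray (α φ θ r : ℝ) : ℂ :=
  (r : ℂ) * Complex.exp (θ * Complex.I) +
    Complex.exp (φ * Complex.I) * ((r ^ (1 - α) : ℝ) : ℂ) *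
      Complex.exp (((1 - α) * θ) * Complex.I)

lemma Fray_im (α φ θ r : ℝ) :
    (Fray α φ θ r).im = r * Real.sin θ + r ^ (1 - α) * Real.sin (φ + (1 - α) * θ) := by
  have hsecond : Complex.exp (φ * I) * ((r ^ (1 - α) : ℝ) : ℂ) * Complex.exp (((1 - α) * θ) * I)
      = ((r ^ (1 - α) : ℝ) : ℂ) * Complex.exp ((φ + (1 - α) * θ : ℝ) * I) := by
    push_cast
    rw [add_mul, Complex.exp_add]
    ring
  rw [Fray, hsecond]
  simp only [add_im, mul_im, ofReal_re, ofReal_im, exp_ofReal_mul_I_im, exp_ofReal_mul_I_re,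
    zero_mul, add_zero]

lemma Fray_im_nonpos {α φ θ r : ℝ} (hr : 0 ≤ r) (hθ : Real.sin θ ≤ 0)
    (hphase : Real.sin (φ + (1 - α) * θ) ≤ 0) : (Fray α φ θ r).im ≤ 0 := by
  rw [Fray_im]
  exact add_nonpos (mul_nonpos_of_nonneg_of_nonpos hr hθ)
    (mul_nonpos_of_nonneg_of_nonpos (rpow_nonneg hr _) hphase)

lemma Real.sin_nonpos_of_pi_le_of_le_two_pi {x : ℝ} (hπx : π ≤ x) (hx2π : x ≤ 2 * π) :
    Real.sin x ≤ 0 := by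
  rw [← sin_sub_two_pi]
  exact sin_nonpos_of_nonpos_of_neg_pi_le (by linarith) (by linarith)

theorem boolean_stable_rays_in_lower_halfplane
    (α ρ φ θ₁ θ₂ : ℝ) (hα : 0 < α) (hα' : α < 1 / 2) (hρ : ρ ∈ Set.Icc (0 : ℝ) 1)
    (hφ : φ = α * ρ * π) (hθ₁ : θ₁ = -φ / (1 - α)) (hθ₂ : θ₂ = (π - φ) / (1 - α)) :
    ∀ r : ℝ, 0 ≤ r → (Fray α φ θ₁ r).im ≤ 0 ∧ (Fray α φ θ₂ r).im ≤ 0 := by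
  intro r hr
  have h1α : 0 < 1 - α := by linarith
  have hφ0 : 0 ≤ φ := hφ ▸ mul_nonneg (mul_nonneg hα.le hρ.1) pi_pos.le
  have hφα : φ ≤ α * π := hφ ▸ by nlinarith [mul_pos hα pi_pos, hρ.2]
  have hphase₁ : φ + (1 - α) * θ₁ = 0 := by rw [hθ₁, mul_div_cancel₀ _ h1α.ne']; ring
  have hphase₂ : φ + (1 - α) * θ₂ = π := by rw [hθ₂, mul_div_cancel₀ _ h1α.ne']; ring
  have hθ₁_mem : -π ≤ θ₁ ∧ θ₁ ≤ 0 := by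
    rw [hθ₁, le_div_iff₀ h1α, div_nonpos_iff]
    exact ⟨by nlinarith, Or.inr ⟨by linarith, h1α.le⟩⟩
  have hθ₂_mem : π ≤ θ₂ ∧ θ₂ ≤ 2 * π := by
    rw [hθ₂, le_div_iff₀ h1α, div_le_iff₀ h1α]
    constructor <;> nlinarith [pi_pos]
  refine ⟨Fray_im_nonpos hr ?_ ?_, Fray_im_nonpos hr ?_ ?_⟩
  · exact sin_nonpos_of_nonpos_of_neg_pi_le hθ₁_mem.2 hθ₁_mem.1
  · rw [hphase₁, Real.sin_zero]
  · exact Real.sin_nonpos_of_pi_le_of_le_two_pi hθ₂_mem.1 hθ₂_mem.2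
  · rw [hphase₂, Real.sin_pi]
end

section
/- Let 0 < α < 1/2, φ = αρπ with ρ ∈ [0,1], θ₁ = -φ/(1-α), θ₂ = (π-φ)/(1-α), and F(z) = z + e^{iφ} z^{1-α}. Then F(l_{θ₁}) ∩ F(l_{θ₂}) = {0}, where l_θ = {r e^{iθ} : r ≥ 0}. -/
open Complex Real Set

theorem boolean_stable_F_ray_images_intersect_only_at_zero
    (α ρ φ θ₁ θ₂ : ℝ) (hα : 0 < α) (hα' : α < 1 / 2) (hρ : ρ ∈ Set.Icc (0 : ℝ) 1)
    (hφ : φ = α * ρ * π) (hθ₁ : θ₁ = -φ / (1 - α)) (hθ₂ : θ₂ = (π - φ) / (1 - α)) :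
    (Fray α φ θ₁ '' Set.Ici 0) ∩ (Fray α φ θ₂ '' Set.Ici 0) = {0} := by
  have hπ := Real.pi_pos
  have h1α : (0:ℝ) < 1 - α := by linarith
  obtain ⟨hρ0, hρ1⟩ := hρ
  have hφ0 : 0 ≤ φ := by rw [hφ]; positivity
  have hφα : φ ≤ α * π := by
    rw [hφ]
    have h := mul_le_mul_of_nonneg_left hρ1 hα.le
    nlinarith
  have hθ₁0 : θ₁ ≤ 0 := by
    rw [hθ₁]
    apply div_nonpos_of_nonpos_of_nonneg <;> linarith
  have hθ₁π : -π < θ₁ := by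
    rw [hθ₁, neg_div, neg_lt_neg_iff, div_lt_iff₀ h1α]; nlinarith
  have hθ₂π : π ≤ θ₂ := by rw [hθ₂, le_div_iff₀ h1α]; nlinarith
  have hθ₂2π : θ₂ < 2*π := by rw [hθ₂, div_lt_iff₀ h1α]; nlinarith
  have key₁ : φ + (1-α)*θ₁ = 0 := by rw [hθ₁]; field_simp; try ring
  have key₂ : φ + (1-α)*θ₂ = π := by rw [hθ₂]; field_simp; try ring
  have hsin₁ : Real.sin θ₁ ≤ 0 := by
    have := Real.sin_nonneg_of_nonneg_of_le_pi (x := -θ₁) (by linarith) (by linarith)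
    rwa [Real.sin_neg, neg_nonneg] at this
  have hsin₂ : Real.sin θ₂ ≤ 0 := by
    have h := Real.sin_nonneg_of_nonneg_of_le_pi (x := θ₂ - π) (by linarith) (by linarith)
    have h2 := Real.sin_sub_pi θ₂
    linarith
  have hΔ : θ₂ - θ₁ = π/(1-α) := by rw [hθ₁, hθ₂]; ring
  have hΔ1 : π < θ₂ - θ₁ := by rw [hΔ, lt_div_iff₀ h1α]; nlinarith
  have hΔ2 : θ₂ - θ₁ < 2*π := by rw [hΔ, div_lt_iff₀ h1α]; nlinarith
  have hsinΔ : Real.sin (θ₂ - θ₁) < 0 := by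
    have h := Real.sin_pos_of_pos_of_lt_pi (x := θ₂ - θ₁ - π) (by linarith) (by linarith)
    have h2 := Real.sin_sub_pi (θ₂ - θ₁)
    linarith
  have hcos₂ : Real.cos θ₂ < 1 := by
    refine lt_of_le_of_ne (Real.cos_le_one θ₂) ?_
    intro h
    have := (Real.cos_eq_one_iff_of_lt_of_lt (x := θ₂) (by linarith) (by linarith)).mp h
    linarith
  have hcos₁ : -1 < Real.cos θ₁ := by
    have h1 : Real.cos (π - (-θ₁)) = -Real.cos (-θ₁) := Real.cos_pi_sub _
    rw [Real.cos_neg] at h1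
    have h2 : Real.cos (π + θ₁) ≤ 1 := Real.cos_le_one _
    have h3 : Real.cos (π + θ₁) ≠ 1 := by
      intro h
      have := (Real.cos_eq_one_iff_of_lt_of_lt (x := π + θ₁) (by linarith) (by linarith)).mp h
      linarith
    have : π - (-θ₁) = π + θ₁ := by ring
    rw [this] at h1
    have := lt_of_le_of_ne h2 h3
    linarith
  have hF₁ : ∀ r : ℝ, Fray α φ θ₁ r =
      (r : ℂ) * Complex.exp (θ₁ * Complex.I) + ((r ^ (1 - α) : ℝ) : ℂ) := by
    intro r
    unfold Fray
    have : Complex.exp (φ * Complex.I) * Complex.exp (((1 - α) * θ₁) * Complex.I) = 1 := by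
      rw [← Complex.exp_add, ← add_mul]
      have : (φ : ℂ) + (1 - (α:ℂ)) * (θ₁:ℂ) = ((φ + (1-α)*θ₁ : ℝ) : ℂ) := by push_cast; ring
      rw [this, key₁]
      simp
    calc (r : ℂ) * Complex.exp (θ₁ * Complex.I) +
        Complex.exp (φ * Complex.I) * ((r ^ (1 - α) : ℝ) : ℂ) *
          Complex.exp (((1 - α) * θ₁) * Complex.I)
        = (r : ℂ) * Complex.exp (θ₁ * Complex.I) + ((r ^ (1 - α) : ℝ) : ℂ) *
            (Complex.exp (φ * Complex.I) * Complex.exp (((1 - α) * θ₁) * Complex.I)) := by ring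
      _ = _ := by rw [this]; ring
  have hF₂ : ∀ r : ℝ, Fray α φ θ₂ r =
      (r : ℂ) * Complex.exp (θ₂ * Complex.I) - ((r ^ (1 - α) : ℝ) : ℂ) := by
    intro r
    unfold Fray
    have : Complex.exp (φ * Complex.I) * Complex.exp (((1 - α) * θ₂) * Complex.I) = -1 := by
      rw [← Complex.exp_add, ← add_mul]
      have : (φ : ℂ) + (1 - (α:ℂ)) * (θ₂:ℂ) = ((φ + (1-α)*θ₂ : ℝ) : ℂ) := by push_cast; ring
      rw [this, key₂]
      exact Complex.exp_pi_mul_I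
    calc (r : ℂ) * Complex.exp (θ₂ * Complex.I) +
        Complex.exp (φ * Complex.I) * ((r ^ (1 - α) : ℝ) : ℂ) *
          Complex.exp (((1 - α) * θ₂) * Complex.I)
        = (r : ℂ) * Complex.exp (θ₂ * Complex.I) + ((r ^ (1 - α) : ℝ) : ℂ) *
            (Complex.exp (φ * Complex.I) * Complex.exp (((1 - α) * θ₂) * Complex.I)) := by ring
      _ = _ := by rw [this]; ring
  have hrpow0 : (0:ℝ) ^ (1 - α) = 0 := Real.zero_rpow (by linarith)
  ext z
  simp only [Set.mem_inter_iff, Set.mem_image, Set.mem_singleton_iff, Set.mem_Ici]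
  constructor
  · rintro ⟨⟨r₁, hr₁, h₁⟩, ⟨r₂, hr₂, h₂⟩⟩
    rw [hF₁] at h₁
    rw [hF₂] at h₂
    have hs₁ : (0:ℝ) ≤ r₁ ^ (1 - α) := Real.rpow_nonneg hr₁ _
    have hs₂ : (0:ℝ) ≤ r₂ ^ (1 - α) := Real.rpow_nonneg hr₂ _
    have heq := h₁.trans h₂.symm
    have him := congrArg Complex.im heq
    have hre := congrArg Complex.re heq
    simp only [Complex.add_im, Complex.add_re, Complex.sub_im, Complex.sub_re,
      Complex.mul_im, Complex.mul_re, Complex.ofReal_re, Complex.ofReal_im,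
      Complex.exp_ofReal_mul_I_re, Complex.exp_ofReal_mul_I_im, zero_mul, mul_zero,
      add_zero, sub_zero, zero_add, zero_sub] at him hre
    -- him : r₁ * sin θ₁ = r₂ * sin θ₂ ; hre : r₁ * cos θ₁ + r₁^(1-α) = r₂ * cos θ₂ - r₂^(1-α)
    have e1 : r₁ * r₂ * Real.sin (θ₂ - θ₁)
        = (r₁ * Real.sin θ₁) * (r₁ * Real.cos θ₁ - r₂ * Real.cos θ₂) := by
      rw [Real.sin_sub]
      linear_combination (-(r₁ * Real.cos θ₁)) * him
    have e3 : 0 ≤ r₁ * r₂ * Real.sin (θ₂ - θ₁) := by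
      rw [e1]
      have ha : r₁ * Real.sin θ₁ ≤ 0 := mul_nonpos_iff.mpr (Or.inl ⟨hr₁, hsin₁⟩)
      have hb : r₁ * Real.cos θ₁ - r₂ * Real.cos θ₂ ≤ 0 := by linarith
      have h := mul_nonneg (neg_nonneg.mpr ha) (neg_nonneg.mpr hb)
      rw [neg_mul_neg] at h
      exact h
    have hr12 : r₁ * r₂ = 0 := by
      have h4 : 0 ≤ r₁ * r₂ := mul_nonneg hr₁ hr₂
      have h5 : r₁ * r₂ ≤ 0 := by
        rcases le_or_gt (r₁ * r₂) 0 with h | h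
        · exact h
        · exfalso
          have := mul_neg_of_pos_of_neg h hsinΔ
          linarith
      exact le_antisymm h5 h4
    rcases mul_eq_zero.mp hr12 with h0 | h0
    · -- r₁ = 0
      subst h0
      simp only [hrpow0, zero_mul, zero_add] at him hre
      have hr₂0 : r₂ = 0 := by
        rcases lt_or_eq_of_le hsin₂ with hlt | heq0
        · have := mul_eq_zero.mp him.symm
          rcases this with h | h
          · exact h
          · exact absurd h (ne_of_lt hlt)
        · have hc2 : Real.sin θ₂ ^ 2 + Real.cos θ₂ ^ 2 = 1 := Real.sin_sq_add_cos_sq θ₂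
          have h6 : (Real.cos θ₂ - 1) * (Real.cos θ₂ + 1) = 0 := by
            linear_combination hc2 - Real.sin θ₂ * heq0
          have hcneg : Real.cos θ₂ = -1 := by
            rcases mul_eq_zero.mp h6 with h | h
            · exfalso; linarith
            · linarith
          rw [hcneg] at hre
          linarith
      subst hr₂0
      rw [hrpow0] at h₂
      simpa using h₂.symm
    · -- r₂ = 0
      subst h0
      simp only [hrpow0, mul_zero, zero_mul, sub_zero, zero_sub] at him hre
      have hr₁0 : r₁ = 0 := by
        rcases lt_or_eq_of_le hsin₁ with hlt | heq0
        · have := mul_eq_zero.mp him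
          rcases this with h | h
          · exact h
          · exact absurd h (ne_of_lt hlt)
        · have hc1 : Real.sin θ₁ ^ 2 + Real.cos θ₁ ^ 2 = 1 := Real.sin_sq_add_cos_sq θ₁
          have h6 : (Real.cos θ₁ - 1) * (Real.cos θ₁ + 1) = 0 := by
            linear_combination hc1 - Real.sin θ₁ * heq0
          have hcpos : Real.cos θ₁ = 1 := by
            rcases mul_eq_zero.mp h6 with h | h
            · linarith
            · exfalso; linarith
          rw [hcpos] at hre
          linarith
      subst hr₁0
      rw [hrpow0] at h₁
      simpa using h₁.symm
  · rintro rfl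
    refine ⟨⟨0, le_refl 0, ?_⟩, ⟨0, le_refl 0, ?_⟩⟩ <;>
      simp [hF₁, hF₂, hrpow0]
end

section
/- If f : (0,∞) → ℝ is completely monotone and h : (0,∞) → (0,∞) is differentiable with h' completely monotone, then f ∘ h is completely monotone. -/
open Real Set

/-- A function is completely monotone on `(0, ∞)` if it is infinitely differentiable there
and `(-1)^n f^(n)(x) ≥ 0` for all `n ≥ 0` and `x > 0`. -/
def CompletelyMonotoneOn (f : ℝ → ℝ) : Prop :=
  (∀ x : ℝ, 0 < x → ContDiffAt ℝ ((⊤ : ℕ∞) : WithTop ℕ∞) f x) ∧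
    ∀ (n : ℕ) (x : ℝ), 0 < x → 0 ≤ (-1 : ℝ) ^ n * iteratedDeriv n f x

/-!
By the chain rule `-(f ∘ h)' = ((-f') ∘ h) * h'`, and `-f'` is again completely monotone.
Leibniz' rule expresses the `n`-th derivative of this product through derivatives of order
`≤ n` of `(-f') ∘ h` and of `h'`, whose signs alternate (by induction on the order, applied
to `-f'` in place of `f`, and by hypothesis), and the signs of all terms of the sum agree.
-/

open scoped ContDiff

theorem neg_one_pow_mul_iteratedDeriv_mul_nonneg {u v : ℝ → ℝ} {x : ℝ} {n : ℕ}
    (hu : ContDiffAt ℝ n u x) (hv : ContDiffAt ℝ n v x)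
    (hu_sign : ∀ k ≤ n, 0 ≤ (-1 : ℝ) ^ k * iteratedDeriv k u x)
    (hv_sign : ∀ k ≤ n, 0 ≤ (-1 : ℝ) ^ k * iteratedDeriv k v x) :
    0 ≤ (-1 : ℝ) ^ n * iteratedDeriv n (fun y => u y * v y) x := by
  rw [iteratedDeriv_fun_mul hu hv, Finset.mul_sum]
  refine Finset.sum_nonneg fun k hk => ?_
  have hkn : k ≤ n := Nat.lt_succ_iff.1 (Finset.mem_range.1 hk)
  have hsign : (-1 : ℝ) ^ n = (-1) ^ k * (-1) ^ (n - k) := by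
    rw [← pow_add, Nat.add_sub_cancel' hkn]
  calc (0 : ℝ) ≤ (n.choose k : ℝ) * ((-1) ^ k * iteratedDeriv k u x) *
        ((-1) ^ (n - k) * iteratedDeriv (n - k) v x) :=
        mul_nonneg (mul_nonneg (Nat.cast_nonneg _) (hu_sign k hkn))
          (hv_sign (n - k) (Nat.sub_le n k))
    _ = _ := by rw [hsign]; ring

theorem iteratedDeriv_succ_comp_of_isOpen {f h : ℝ → ℝ} {s : Set ℝ} (hs : IsOpen s)
    (hf : ∀ y ∈ s, DifferentiableAt ℝ f (h y)) (hh : ∀ y ∈ s, DifferentiableAt ℝ h y)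
    (n : ℕ) {x : ℝ} (hx : x ∈ s) :
    iteratedDeriv (n + 1) (f ∘ h) x = iteratedDeriv n (fun y => deriv f (h y) * deriv h y) x := by
  rw [iteratedDeriv_succ']
  exact Set.EqOn.iteratedDeriv_of_isOpen (fun y hy => deriv_comp y (hf y hy) (hh y hy)) hs n hx

namespace CompletelyMonotoneOn

variable {f h : ℝ → ℝ}

theorem contDiffOn (hf : CompletelyMonotoneOn f) : ContDiffOn ℝ ∞ f (Ioi 0) :=
  fun x hx => (hf.1 x hx).contDiffWithinAt

theorem neg_deriv (hf : CompletelyMonotoneOn f) : CompletelyMonotoneOn (fun y => -deriv f y) := by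
  refine ⟨fun x hx => ?_, fun n x hx => ?_⟩
  · exact ((hf.contDiffOn.deriv_of_isOpen isOpen_Ioi le_rfl).contDiffAt
      (isOpen_Ioi.mem_nhds hx)).neg
  · rw [iteratedDeriv_fun_neg, ← iteratedDeriv_succ']
    calc (0 : ℝ) ≤ (-1) ^ (n + 1) * iteratedDeriv (n + 1) f x := hf.2 (n + 1) x hx
      _ = (-1) ^ n * -iteratedDeriv (n + 1) f x := by ring

theorem contDiffAt_comp (hf : CompletelyMonotoneOn f) (hpos : ∀ x : ℝ, 0 < x → 0 < h x)
    (hh : ContDiffOn ℝ ∞ h (Ioi 0)) {x : ℝ} (hx : 0 < x) : ContDiffAt ℝ ∞ (f ∘ h) x :=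
  (hf.1 (h x) (hpos x hx)).comp x (hh.contDiffAt (isOpen_Ioi.mem_nhds hx))

theorem neg_one_pow_mul_iteratedDeriv_comp_nonneg (hf : CompletelyMonotoneOn f)
    (hpos : ∀ x : ℝ, 0 < x → 0 < h x) (hh : ContDiffOn ℝ ∞ h (Ioi 0))
    (hder : CompletelyMonotoneOn (deriv h)) (n : ℕ) {x : ℝ} (hx : 0 < x) :
    0 ≤ (-1 : ℝ) ^ n * iteratedDeriv n (f ∘ h) x := by
  induction n using Nat.strong_induction_on generalizing f with
  | _ n ih =>
  cases n with
  | zero => simpa using hf.2 0 (h x) (hpos x hx)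
  | succ m =>
    have hg := hf.neg_deriv
    have hchain := iteratedDeriv_succ_comp_of_isOpen isOpen_Ioi
      (fun y hy => (hf.1 (h y) (hpos y hy)).differentiableAt (by simp))
      (fun y hy => (hh.contDiffAt (isOpen_Ioi.mem_nhds hy)).differentiableAt (by simp)) m hx
    have hneg : (fun y => deriv f (h y) * deriv h y) =
        fun y => -(((fun z => -deriv f z) ∘ h) y * deriv h y) := by
      funext y; simp
    have hprod := neg_one_pow_mul_iteratedDeriv_mul_nonneg (n := m)
      ((hg.contDiffAt_comp hpos hh hx).of_le (by exact_mod_cast le_top))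
      ((hder.1 x hx).of_le (by exact_mod_cast le_top))
      (fun k hk => ih k (Nat.lt_succ_of_le hk) hg) (fun k _ => hder.2 k x hx)
    rwa [hchain, hneg, iteratedDeriv_fun_neg, pow_succ, mul_neg_one, neg_mul_neg]

end CompletelyMonotoneOn

theorem completelyMonotone_comp
    (f h : ℝ → ℝ) (hf : CompletelyMonotoneOn f)
    (hpos : ∀ x : ℝ, 0 < x → 0 < h x)
    (hdiff : ∀ x : ℝ, 0 < x → DifferentiableAt ℝ h x)
    (hder : CompletelyMonotoneOn (deriv h)) :
    CompletelyMonotoneOn (f ∘ h) := by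
  have hh : ContDiffOn ℝ ∞ h (Ioi 0) :=
    (contDiffOn_infty_iff_deriv_of_isOpen isOpen_Ioi).2
      ⟨fun y hy => (hdiff y hy).differentiableWithinAt, hder.contDiffOn⟩
  exact ⟨fun x hx => hf.contDiffAt_comp hpos hh hx,
    fun n x hx => hf.neg_one_pow_mul_iteratedDeriv_comp_nonneg hpos hh hder n hx⟩
end

section
/- If h : (0,∞) → (0,∞) is differentiable with h' completely monotone, then 1/h is completely monotone. -/
/-!
Since `(1/h)' = -h' · (1/h) · (1/h)`, the sign of `(1/h)⁽ⁿ⁺¹⁾` is that of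
`-(h' · (1/h) · (1/h))⁽ⁿ⁾`. Expanded by the Leibniz rule, this is a sum of products of derivatives
of order at most `n` whose signs alternate with their order, so strong induction on `n` gives
`(-1)ⁿ (1/h)⁽ⁿ⁾ ≥ 0`.
-/

open Real Set

open scoped ContDiff

/-- Each Leibniz term `(n choose i) f⁽ⁱ⁾ g⁽ⁿ⁻ⁱ⁾` of `(f g)⁽ⁿ⁾` has sign `(-1)ⁱ (-1)ⁿ⁻ⁱ = (-1)ⁿ`. -/
theorem neg_one_pow_mul_iteratedDeriv_mul_nonneg_s6 {f g : ℝ → ℝ} {n : ℕ} {x : ℝ}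
    (hf : ContDiffAt ℝ n f x) (hg : ContDiffAt ℝ n g x)
    (hf_sign : ∀ i ≤ n, 0 ≤ (-1 : ℝ) ^ i * iteratedDeriv i f x)
    (hg_sign : ∀ i ≤ n, 0 ≤ (-1 : ℝ) ^ i * iteratedDeriv i g x) :
    0 ≤ (-1 : ℝ) ^ n * iteratedDeriv n (f * g) x := by
  rw [iteratedDeriv_mul hf hg, Finset.mul_sum]
  refine Finset.sum_nonneg fun i hi => ?_
  have hin : i ≤ n := Nat.lt_succ_iff.mp (Finset.mem_range.mp hi)
  calc (0 : ℝ) ≤ n.choose i * (((-1) ^ i * iteratedDeriv i f x) *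
        ((-1) ^ (n - i) * iteratedDeriv (n - i) g x)) :=
      mul_nonneg (Nat.cast_nonneg _) (mul_nonneg (hf_sign i hin) (hg_sign (n - i) (Nat.sub_le n i)))
    _ = (-1) ^ n * (n.choose i * iteratedDeriv i f x * iteratedDeriv (n - i) g x) := by
      rw [← Nat.add_sub_cancel' hin, pow_add, Nat.add_sub_cancel_left]
      ring

theorem deriv_inv_eq_neg_deriv_mul_inv_mul_inv {h : ℝ → ℝ} {x : ℝ}
    (hd : DifferentiableAt ℝ h x) (hx : h x ≠ 0) :
    deriv h⁻¹ x = (-(deriv h * (h⁻¹ * h⁻¹))) x := by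
  rw [deriv_inv'' hd hx]
  simp only [Pi.neg_apply, Pi.mul_apply, Pi.inv_apply]
  field_simp

theorem neg_one_pow_mul_iteratedDeriv_inv_nonneg {h : ℝ → ℝ} {s : Set ℝ} (hs : IsOpen s)
    (hpos : ∀ x ∈ s, 0 < h x) (hsmooth : ContDiffOn ℝ ∞ h s)
    (hder : ∀ n, ∀ x ∈ s, 0 ≤ (-1 : ℝ) ^ n * iteratedDeriv n (deriv h) x) (n : ℕ) :
    ∀ x ∈ s, 0 ≤ (-1 : ℝ) ^ n * iteratedDeriv n h⁻¹ x := by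
  have hle : ∀ k : ℕ, (k : WithTop ℕ∞) ≤ ∞ := fun k => WithTop.coe_le_coe.2 le_top
  have hinv_smooth : ContDiffOn ℝ ∞ h⁻¹ s := hsmooth.inv fun x hx => (hpos x hx).ne'
  have hder_smooth : ContDiffOn ℝ ∞ (deriv h) s := hsmooth.deriv_of_isOpen hs (by simp)
  induction n using Nat.strong_induction_on with
  | _ n ih =>
  intro x hx
  rcases n with _ | n
  · simpa using (hpos x hx).le
  have hdiff : DifferentiableOn ℝ h s := hsmooth.differentiableOn (by simp)
  have hderiv : deriv h⁻¹ =ᶠ[nhds x] -(deriv h * (h⁻¹ * h⁻¹)) :=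
    Filter.eventually_of_mem (hs.mem_nhds hx) fun y hy =>
      deriv_inv_eq_neg_deriv_mul_inv_mul_inv (hdiff.differentiableAt (hs.mem_nhds hy))
        (hpos y hy).ne'
  have hinv_at : ContDiffAt ℝ ∞ h⁻¹ x := hinv_smooth.contDiffAt (hs.mem_nhds hx)
  have hsq : ∀ i ≤ n, 0 ≤ (-1 : ℝ) ^ i * iteratedDeriv i (h⁻¹ * h⁻¹) x := fun i hi =>
    neg_one_pow_mul_iteratedDeriv_mul_nonneg_s6 (hinv_at.of_le (hle i)) (hinv_at.of_le (hle i))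
      (fun j hj => ih j (by omega) x hx) (fun j hj => ih j (by omega) x hx)
  have hprod : 0 ≤ (-1 : ℝ) ^ n * iteratedDeriv n (deriv h * (h⁻¹ * h⁻¹)) x :=
    neg_one_pow_mul_iteratedDeriv_mul_nonneg_s6
      ((hder_smooth.contDiffAt (hs.mem_nhds hx)).of_le (hle n))
      ((hinv_at.mul hinv_at).of_le (hle n)) (fun i _ => hder i x hx) hsq
  rw [iteratedDeriv_succ', (hderiv.iteratedDeriv n).eq_of_nhds, iteratedDeriv_neg]
  convert hprod using 1
  ring

theorem completelyMonotone_inv_of_deriv_completelyMonotone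
    (h : ℝ → ℝ) (hpos : ∀ x : ℝ, 0 < x → 0 < h x)
    (hdiff : ∀ x : ℝ, 0 < x → DifferentiableAt ℝ h x)
    (hder : CompletelyMonotoneOn (deriv h)) :
    CompletelyMonotoneOn (fun x : ℝ => 1 / h x) := by
  have hsmooth : ContDiffOn ℝ ∞ h (Ioi 0) :=
    (contDiffOn_infty_iff_deriv_of_isOpen isOpen_Ioi).mpr
      ⟨fun x hx => (hdiff x hx).differentiableWithinAt,
        fun x hx => (hder.1 x hx).contDiffWithinAt⟩
  have hinv : (fun x : ℝ => 1 / h x) = h⁻¹ := by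
    ext x
    simp
  rw [hinv]
  exact ⟨fun x hx => (hsmooth.contDiffAt (Ioi_mem_nhds hx)).inv (hpos x hx).ne',
    neg_one_pow_mul_iteratedDeriv_inv_nonneg isOpen_Ioi hpos hsmooth hder.2⟩
end

section
/- For α ∈ (0,1), the function g_α(x) = (1/π) · sin(απ) x^{α-1} / (x^{2α} + 2 cos(απ) x^α + 1) is a probability density on (0,∞), i.e., it is nonnegative and integrates to 1. -/
/-!
Completing the square, `x^(2α) + 2 cos θ x^α + 1 = (x^α + cos θ)² + sin² θ`, so the integrand
`sin θ x^(α-1) / (x^(2α) + 2 cos θ x^α + 1)` has the antiderivative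
`arctan ((x^α + cos θ) / sin θ) / α`. As `x` runs over `(0, ∞)` the arctangent rises from
`arctan (cot θ) = π/2 - θ` to `π/2`, so the integral is `θ / α`; for `θ = απ` and the factor `1/π`
this is `1`.
-/

open Real Set MeasureTheory Filter Topology

variable {α θ x : ℝ}

lemma rpow_two_mul_add_two_cos_mul_rpow_add_one (hx : 0 ≤ x) (α θ : ℝ) :
    x ^ (2 * α) + 2 * cos θ * x ^ α + 1 = (x ^ α + cos θ) ^ 2 + sin θ ^ 2 := by
  rw [mul_comm 2 α, rpow_mul hx, rpow_two]
  linear_combination -sin_sq_add_cos_sq θ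

lemma sin_mul_rpow_div_rpow_two_mul_add_two_cos_mul_rpow_add_one_nonneg (hx : 0 ≤ x)
    (hθ : 0 ≤ sin θ) : 0 ≤ sin θ * x ^ (α - 1) / (x ^ (2 * α) + 2 * cos θ * x ^ α + 1) := by
  rw [rpow_two_mul_add_two_cos_mul_rpow_add_one hx]
  positivity

lemma arctan_cos_div_sin (h0 : 0 < θ) (hπ : θ < π) : arctan (cos θ / sin θ) = π / 2 - θ := by
  rw [← arctan_tan (x := π / 2 - θ) (by linarith) (by linarith), tan_eq_sin_div_cos,
    sin_pi_div_two_sub, cos_pi_div_two_sub]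

lemma hasDerivAt_arctan_rpow_add_cos_div_sin (hx : 0 < x) (hθ : sin θ ≠ 0) :
    HasDerivAt (fun y => arctan ((y ^ α + cos θ) / sin θ))
      (α * (sin θ * x ^ (α - 1) / (x ^ (2 * α) + 2 * cos θ * x ^ α + 1))) x := by
  have h := (((hasDerivAt_rpow_const (p := α) (Or.inl hx.ne')).add_const (cos θ)).div_const
    (sin θ)).arctan
  convert h using 1
  rw [rpow_two_mul_add_two_cos_mul_rpow_add_one hx.le]
  field_simp
  ring

theorem integral_Ioi_sin_mul_rpow_div (hα : 0 < α) (h0 : 0 < θ) (hπ : θ < π) :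
    ∫ x in Ioi 0, sin θ * x ^ (α - 1) / (x ^ (2 * α) + 2 * cos θ * x ^ α + 1) = θ / α := by
  have hsin : 0 < sin θ := sin_pos_of_pos_of_lt_pi h0 hπ
  have hderiv : ∀ x ∈ Ioi (0 : ℝ), HasDerivAt (fun y => arctan ((y ^ α + cos θ) / sin θ) / α)
      (sin θ * x ^ (α - 1) / (x ^ (2 * α) + 2 * cos θ * x ^ α + 1)) x := fun x hx => by
    simpa [hα.ne'] using (hasDerivAt_arctan_rpow_add_cos_div_sin hx hsin.ne' (α := α)).div_const α
  have hnonneg : ∀ x ∈ Ioi (0 : ℝ),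
      0 ≤ sin θ * x ^ (α - 1) / (x ^ (2 * α) + 2 * cos θ * x ^ α + 1) := fun x hx =>
    sin_mul_rpow_div_rpow_two_mul_add_two_cos_mul_rpow_add_one_nonneg (le_of_lt hx) hsin.le
  have hcont : ContinuousWithinAt (fun y => arctan ((y ^ α + cos θ) / sin θ) / α) (Ici 0) 0 :=
    ((continuousAt_arctan.comp (((continuousAt_rpow_const 0 α (Or.inr hα.le)).add
      continuousAt_const).div_const _)).div_const _).continuousWithinAt
  have hlim : Tendsto (fun y => arctan ((y ^ α + cos θ) / sin θ) / α) atTop (𝓝 (π / 2 / α)) :=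
    ((tendsto_arctan_atTop.mono_right nhdsWithin_le_nhds).comp
      ((tendsto_atTop_add_const_right _ _ (tendsto_rpow_atTop hα)).atTop_div_const hsin)).div_const _
  rw [integral_Ioi_of_hasDerivAt_of_nonneg hcont hderiv hnonneg hlim, zero_rpow hα.ne', zero_add,
    arctan_cos_div_sin h0 hπ]
  ring

theorem boolean_stable_density_is_probability_density
    (α : ℝ) (hα : 0 < α) (hα' : α < 1) :
    (∀ x : ℝ, 0 < x →
        0 ≤ (1 / π) * (Real.sin (α * π) * x ^ (α - 1)) /
            (x ^ (2 * α) + 2 * Real.cos (α * π) * x ^ α + 1)) ∧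
      ∫ x in Set.Ioi (0 : ℝ),
          (1 / π) * (Real.sin (α * π) * x ^ (α - 1)) /
            (x ^ (2 * α) + 2 * Real.cos (α * π) * x ^ α + 1) = 1 := by
  have h0 : 0 < α * π := mul_pos hα pi_pos
  have hπ : α * π < π := mul_lt_of_lt_one_left pi_pos hα'
  have hsin : 0 < sin (α * π) := sin_pos_of_pos_of_lt_pi h0 hπ
  simp_rw [mul_div_assoc (1 / π)]
  refine ⟨fun x hx => mul_nonneg (by positivity)
    (sin_mul_rpow_div_rpow_two_mul_add_two_cos_mul_rpow_add_one_nonneg hx.le hsin.le), ?_⟩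
  rw [integral_const_mul, integral_Ioi_sin_mul_rpow_div hα h0 hπ]
  field_simp
end

section
/- Let σ be a finite positive Borel measure supported on (0, β] with 0 < β < 1/2, and set F(z) = z + ∫ e^{iαπ} z^{1-α} dσ(α) for z in the sector {r e^{iθ} : r > 0, θ_β ≤ θ ≤ π}, where θ_β = -βπ/(1-β). Then F is injective on the half-line l_{θ_β} = {r e^{iθ_β} : r ≥ 0}. -/
open Complex Real Set MeasureTheory

lemma cbc_aux_int (σ : Measure ℝ) [IsFiniteMeasure σ] (β θβ : ℝ)
    (hβ : 0 < β) (hβ1 : β < 1)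
    (hsupp : σ (Set.Ioc 0 β)ᶜ = 0) (r : ℝ) (hr : 0 ≤ r) :
    Integrable (fun α : ℝ => Complex.exp ((α * π) * Complex.I) * ((r ^ (1 - α) : ℝ) : ℂ) *
      Complex.exp (((1 - α) * θβ) * Complex.I)) σ := by
  have hae : ∀ᵐ α ∂σ, α ∈ Set.Ioc 0 β := by rw [MeasureTheory.ae_iff]; exact hsupp
  rcases hr.eq_or_lt with hr0 | hr0
  · apply MeasureTheory.Integrable.congr (MeasureTheory.integrable_zero _ _ σ)
    filter_upwards [hae] with α hα
    rw [← hr0, Real.zero_rpow (show (1:ℝ) - α ≠ 0 by intro h; linarith [hα.2])]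
    simp
  apply MeasureTheory.Integrable.mono' (integrable_const (max 1 r))
  · apply Continuous.aestronglyMeasurable
    have hc : Continuous fun α : ℝ => r ^ (1 - α) := by
      have hfe : (fun α : ℝ => r ^ (1 - α)) = fun α : ℝ => Real.exp (Real.log r * (1 - α)) := by
        funext α; rw [Real.rpow_def_of_pos hr0]
      rw [hfe]
      exact Real.continuous_exp.comp (continuous_const.mul (continuous_const.sub continuous_id))
    exact ((Complex.continuous_exp.comp ((Complex.continuous_ofReal.mul continuous_const).mul
        continuous_const)).mul (Complex.continuous_ofReal.comp hc)).mul
      (Complex.continuous_exp.comp (((continuous_const.sub Complex.continuous_ofReal).mul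
        continuous_const).mul continuous_const))
  · filter_upwards [hae] with α hα
    have h1α : 0 ≤ 1 - α := by linarith [hα.2]
    have hnorm : ‖Complex.exp ((α * π) * Complex.I) * ((r ^ (1 - α) : ℝ) : ℂ) *
        Complex.exp (((1 - α) * θβ) * Complex.I)‖ = r ^ (1 - α) := by
      simp [Complex.norm_exp, _root_.abs_of_nonneg (Real.rpow_nonneg hr _)]
    rw [hnorm]
    rcases le_total r 1 with h | h
    · exact le_max_of_le_left (Real.rpow_le_one hr h h1α)
    · calc r ^ (1 - α) ≤ r ^ (1 : ℝ) :=
            Real.rpow_le_rpow_of_exponent_le h (by linarith [hα.1])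
        _ = r := Real.rpow_one r
        _ ≤ max 1 r := le_max_right 1 r

lemma cbc_aux_key (σ : Measure ℝ) [IsFiniteMeasure σ] (β θβ : ℝ)
    (hβ : 0 < β) (hβ' : β < 1 / 2)
    (hsupp : σ (Set.Ioc 0 β)ᶜ = 0)
    (hθβ : θβ = -(β * π) / (1 - β))
    (a b : ℝ) (ha : 0 ≤ a) (hab : a < b) :
    (a : ℂ) * Complex.exp (θβ * Complex.I) +
          (∫ α, Complex.exp ((α * π) * Complex.I) * ((a ^ (1 - α) : ℝ) : ℂ) *
            Complex.exp (((1 - α) * θβ) * Complex.I) ∂σ) ≠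
    (b : ℂ) * Complex.exp (θβ * Complex.I) +
          ∫ α, Complex.exp ((α * π) * Complex.I) * ((b ^ (1 - α) : ℝ) : ℂ) *
            Complex.exp (((1 - α) * θβ) * Complex.I) ∂σ := by
  intro heq
  have hπ := Real.pi_pos
  have h1β : (0:ℝ) < 1 - β := by linarith
  have hθ : θβ * (1 - β) = -(β * π) := by rw [hθβ]; field_simp
  have hθgt : -π < θβ := by
    rw [hθβ, neg_div, neg_lt_neg_iff, div_lt_iff₀ h1β]
    nlinarith
  have hθneg : θβ < 0 := by
    rw [hθβ]
    apply div_neg_of_neg_of_pos _ h1β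
    nlinarith
  have hb : 0 ≤ b := ha.trans hab.le
  have hae : ∀ᵐ α ∂σ, α ∈ Set.Ioc 0 β := by rw [MeasureTheory.ae_iff]; exact hsupp
  have hIb := cbc_aux_int σ β θβ hβ (by linarith) hsupp b hb
  have hIa := cbc_aux_int σ β θβ hβ (by linarith) hsupp a ha
  have h0 : ((b - a : ℝ) : ℂ) * Complex.exp ((θβ : ℝ) * Complex.I)
      + ∫ α, (Complex.exp ((α * π) * Complex.I) * ((b ^ (1 - α) : ℝ) : ℂ) *
            Complex.exp (((1 - α) * θβ) * Complex.I)
          - Complex.exp ((α * π) * Complex.I) * ((a ^ (1 - α) : ℝ) : ℂ) *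
            Complex.exp (((1 - α) * θβ) * Complex.I)) ∂σ = 0 := by
    rw [MeasureTheory.integral_sub hIb hIa]
    push_cast
    linear_combination -heq
  have hpt : (fun α : ℝ => Complex.exp (((-(θβ/2) : ℝ) : ℂ) * Complex.I) *
        (Complex.exp ((α * π) * Complex.I) * ((b ^ (1 - α) : ℝ) : ℂ) *
            Complex.exp (((1 - α) * θβ) * Complex.I)
          - Complex.exp ((α * π) * Complex.I) * ((a ^ (1 - α) : ℝ) : ℂ) *
            Complex.exp (((1 - α) * θβ) * Complex.I)))
      = fun α : ℝ => ((b ^ (1 - α) - a ^ (1 - α) : ℝ) : ℂ) *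
          Complex.exp (((α * π + (1 - α) * θβ - θβ/2 : ℝ) : ℂ) * Complex.I) := by
    funext α
    rw [show ((α * π + (1 - α) * θβ - θβ/2 : ℝ) : ℂ) * Complex.I
        = ((-(θβ/2) : ℝ) : ℂ) * Complex.I +
            (((α * π : ℝ) : ℂ) * Complex.I + (((1 - α) * θβ : ℝ) : ℂ) * Complex.I) by
      push_cast; ring]
    rw [Complex.exp_add, Complex.exp_add]
    push_cast
    ring
  have hpt1 : Complex.exp (((-(θβ/2) : ℝ) : ℂ) * Complex.I) *
      (((b - a : ℝ) : ℂ) * Complex.exp ((θβ : ℝ) * Complex.I))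
      = ((b - a : ℝ) : ℂ) * Complex.exp (((θβ/2 : ℝ) : ℂ) * Complex.I) := by
    rw [show ((θβ/2 : ℝ) : ℂ) * Complex.I
        = ((-(θβ/2) : ℝ) : ℂ) * Complex.I + ((θβ : ℝ) : ℂ) * Complex.I by push_cast; ring]
    rw [Complex.exp_add]
    ring
  have h3 := congrArg (fun z => (Complex.exp (((-(θβ/2) : ℝ) : ℂ) * Complex.I) * z).re) h0
  simp only [mul_zero, Complex.zero_re, mul_add] at h3
  rw [← MeasureTheory.integral_const_mul, hpt1, hpt, Complex.add_re] at h3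
  have hGint : Integrable (fun α : ℝ => ((b ^ (1 - α) - a ^ (1 - α) : ℝ) : ℂ) *
      Complex.exp (((α * π + (1 - α) * θβ - θβ/2 : ℝ) : ℂ) * Complex.I)) σ := by
    rw [← hpt]
    exact ((hIb.sub hIa).const_mul _)
  have hre : (∫ α, ((b ^ (1 - α) - a ^ (1 - α) : ℝ) : ℂ) *
        Complex.exp (((α * π + (1 - α) * θβ - θβ/2 : ℝ) : ℂ) * Complex.I) ∂σ).re
      = ∫ α, (b ^ (1 - α) - a ^ (1 - α)) * Real.cos (α * π + (1 - α) * θβ - θβ/2) ∂σ := by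
    rw [← RCLike.re_eq_complex_re, ← integral_re hGint]
    simp only [RCLike.re_eq_complex_re]
    congr 1
    funext α
    rw [Complex.re_ofReal_mul, Complex.exp_ofReal_mul_I_re]
  rw [hre] at h3
  have hfirst : (((b - a : ℝ) : ℂ) * Complex.exp (((θβ/2 : ℝ) : ℂ) * Complex.I)).re
      = (b - a) * Real.cos (θβ/2) := by
    rw [Complex.re_ofReal_mul, Complex.exp_ofReal_mul_I_re]
  rw [hfirst] at h3
  have hcos2 : 0 < Real.cos (θβ/2) :=
    Real.cos_pos_of_mem_Ioo ⟨by linarith, by linarith⟩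
  have hintnn : 0 ≤ ∫ α, (b ^ (1 - α) - a ^ (1 - α)) *
      Real.cos (α * π + (1 - α) * θβ - θβ/2) ∂σ := by
    apply MeasureTheory.integral_nonneg_of_ae
    filter_upwards [hae] with α hα
    have hd : 0 ≤ b ^ (1 - α) - a ^ (1 - α) := by
      have := Real.rpow_le_rpow ha hab.le (show (0:ℝ) ≤ 1 - α by linarith [hα.2])
      linarith
    have hcos : 0 ≤ Real.cos (α * π + (1 - α) * θβ - θβ/2) := by
      apply Real.cos_nonneg_of_mem_Icc
      constructor
      · nlinarith [mul_nonneg hα.1.le (show (0:ℝ) ≤ π - θβ by linarith)]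
      · nlinarith [mul_nonneg (sub_nonneg.2 hα.2) (show (0:ℝ) ≤ π - θβ by linarith)]
    exact mul_nonneg hd hcos
  nlinarith [mul_pos (sub_pos.2 hab) hcos2]

theorem continuous_boolean_convolution_F_injective_on_ray
    (σ : Measure ℝ) [IsFiniteMeasure σ] (β θβ : ℝ)
    (hβ : 0 < β) (hβ' : β < 1 / 2)
    (hsupp : σ (Set.Ioc 0 β)ᶜ = 0)
    (hθβ : θβ = -(β * π) / (1 - β)) :
    Set.InjOn
      (fun r : ℝ =>
        (r : ℂ) * Complex.exp (θβ * Complex.I) +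
          ∫ α, Complex.exp ((α * π) * Complex.I) * ((r ^ (1 - α) : ℝ) : ℂ) *
            Complex.exp (((1 - α) * θβ) * Complex.I) ∂σ)
      (Set.Ici 0) := by
  intro r1 h1 r2 h2 heq
  simp only at heq
  rcases lt_trichotomy r1 r2 with hlt | heq' | hgt
  · exact absurd heq (cbc_aux_key σ β θβ hβ hβ' hsupp hθβ r1 r2 h1 hlt)
  · exact heq'
  · exact absurd heq.symm (cbc_aux_key σ β θβ hβ hβ' hsupp hθβ r2 r1 h2 hgt)
end

section
/- Let 1/2 < α < 1, ρ ∈ [0,1], φ = αρπ, and suppose φ < (2α-1)π. Set θ₃ = (φ+π)/α and F(z) = z + e^{iφ} z^{1-α}. Then π < θ₃ < 2π, and for all r ≥ 0, F(r e^{iθ₃}) = (r - r^{1-α}) e^{iθ₃}. In particular F is not injective on the half-line l_{θ₃}, and F(l_{θ₃}) = {r e^{iθ₃} : r ≥ -α(1-α)^{(1-α)/α}}. -/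
/-!
Since `α θ₃ = φ + π`, the factor `e^{iφ} e^{i(1-α)θ₃}` equals `-e^{iθ₃}`, so `F` maps the ray
`l_{θ₃}` into itself through the real function `g r = r - r^{1-α}`. Weighted AM-GM gives
`g ≥ -α(1-α)^{(1-α)/α}`, with equality at `r = (1-α)^{1/α}`; `g` is continuous and tends to `+∞`,
so its image of `[0, ∞)` is exactly `[-α(1-α)^{(1-α)/α}, ∞)`, and `g 0 = g 1 = 0`.
-/

open Complex Real Set Filter

namespace Real

variable {α : ℝ}

theorem rpow_one_sub_le_add (hα : 0 < α) (hα' : α < 1) {r : ℝ} (hr : 0 ≤ r) :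
    r ^ (1 - α) ≤ r + α * (1 - α) ^ ((1 - α) / α) := by
  have h1α : 0 < 1 - α := by linarith
  -- weighted AM-GM with weights `1 - α`, `α` at the points `r / (1 - α)` and `(1 - α) ^ ((1 - α) / α)`
  have key := geom_mean_le_arith_mean2_weighted h1α.le hα.le (div_nonneg hr h1α.le)
    (rpow_nonneg h1α.le ((1 - α) / α)) (sub_add_cancel 1 α)
  rwa [div_rpow hr h1α.le, ← rpow_mul h1α.le, div_mul_cancel₀ _ hα.ne', div_mul_cancel₀ _
    (rpow_pos_of_pos h1α _).ne', mul_div_cancel₀ _ h1α.ne'] at key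

theorem sub_rpow_one_sub_at_min (hα : 0 < α) (hα' : α < 1) :
    (1 - α) ^ (1 / α) - ((1 - α) ^ (1 / α)) ^ (1 - α) = -α * (1 - α) ^ ((1 - α) / α) := by
  have h1α : 0 < 1 - α := by linarith
  have hinv : 1 / α = (1 - α) / α + 1 := by field_simp; ring
  rw [← rpow_mul h1α.le, one_div_mul_eq_div, hinv, rpow_add h1α, rpow_one]
  ring

theorem tendsto_sub_rpow_one_sub_atTop (hα : 0 < α) (hα' : α < 1) :
    Tendsto (fun r : ℝ => r - r ^ (1 - α)) atTop atTop := by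
  have hprod : Tendsto (fun r : ℝ => r ^ (1 - α) * (r ^ α - 1)) atTop atTop :=
    (tendsto_rpow_atTop (by linarith)).atTop_mul_atTop₀
      (tendsto_atTop_add_const_right _ (-1) (tendsto_rpow_atTop hα))
  refine hprod.congr' ?_
  filter_upwards [eventually_gt_atTop 0] with r hr
  rw [mul_sub, mul_one, ← rpow_add hr, sub_add_cancel, rpow_one]

theorem image_sub_rpow_one_sub_Ici (hα : 0 < α) (hα' : α < 1) :
    (fun r : ℝ => r - r ^ (1 - α)) '' Ici 0 = Ici (-α * (1 - α) ^ ((1 - α) / α)) := by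
  refine Subset.antisymm ?_ ?_
  · rintro _ ⟨r, hr, rfl⟩
    have := rpow_one_sub_le_add hα hα' hr
    simp only [mem_Ici]
    linarith
  · have hcont : Continuous (fun r : ℝ => r - r ^ (1 - α)) :=
      continuous_id.sub (continuous_rpow_const (by linarith))
    rw [← sub_rpow_one_sub_at_min hα hα']
    exact (intermediate_value_Ici hcont.continuousOn
      (tendsto_sub_rpow_one_sub_atTop hα hα')).trans
      (image_mono (Ici_subset_Ici.2 (rpow_nonneg (by linarith) _)))

end Real

theorem Fray_eq_of_mul_eq {α φ θ : ℝ} (h : α * θ = φ + π) (r : ℝ) :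
    Fray α φ θ r = ((r - r ^ (1 - α) : ℝ) : ℂ) * Complex.exp (θ * Complex.I) := by
  have hc : (α : ℂ) * θ = φ + π := by exact_mod_cast h
  have hexp : Complex.exp (φ * I) * Complex.exp ((1 - α) * θ * I) = -Complex.exp (θ * I) := by
    rw [← Complex.exp_add, show (φ : ℂ) * I + (1 - α) * θ * I = θ * I - π * I by
      linear_combination (-I) * hc, Complex.exp_sub, Complex.exp_pi_mul_I, div_neg, div_one]
  unfold Fray
  rw [Complex.ofReal_sub]
  linear_combination ((r ^ (1 - α) : ℝ) : ℂ) * hexp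

theorem boolean_stable_F_collapses_ray_theta3
    (α ρ φ θ₃ : ℝ) (hα : 1 / 2 < α) (hα' : α < 1) (hρ : ρ ∈ Set.Icc (0 : ℝ) 1)
    (hφ : φ = α * ρ * π) (hφ' : φ < (2 * α - 1) * π) (hθ₃ : θ₃ = (φ + π) / α) :
    (π < θ₃ ∧ θ₃ < 2 * π) ∧
      (∀ r : ℝ, 0 ≤ r →
        Fray α φ θ₃ r = ((r - r ^ (1 - α) : ℝ) : ℂ) * Complex.exp (θ₃ * Complex.I)) ∧
      ¬ Set.InjOn (Fray α φ θ₃) (Set.Ici 0) ∧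
      Fray α φ θ₃ '' Set.Ici 0 =
        {w : ℂ | ∃ r : ℝ, -α * (1 - α) ^ ((1 - α) / α) ≤ r ∧
          w = (r : ℂ) * Complex.exp (θ₃ * Complex.I)} := by
  have hα₀ : 0 < α := by linarith
  have hφ₀ : 0 ≤ φ := hφ ▸ by have := hρ.1; positivity
  have hθ : α * θ₃ = φ + π := by rw [hθ₃, mul_div_cancel₀ _ hα₀.ne']
  have hF := Fray_eq_of_mul_eq hθ
  refine ⟨⟨?_, ?_⟩, fun r _ => hF r, ?_, ?_⟩
  · rw [hθ₃, lt_div_iff₀ hα₀]; nlinarith [pi_pos]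
  · rw [hθ₃, div_lt_iff₀ hα₀]; linarith
  · intro hinj
    have h01 : Fray α φ θ₃ 0 = Fray α φ θ₃ 1 := by
      simp [hF, zero_rpow (sub_ne_zero.2 hα'.ne')]
    exact zero_ne_one (hinj self_mem_Ici (mem_Ici.2 zero_le_one) h01)
  · rw [show Fray α φ θ₃ = (fun t : ℝ => (t : ℂ) * Complex.exp (θ₃ * I)) ∘
        (fun r : ℝ => r - r ^ (1 - α)) from funext hF, image_comp,
      image_sub_rpow_one_sub_Ici hα₀ hα']
    ext w
    simp only [mem_image, mem_Ici, mem_ofPred_eq, eq_comm]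
end

section
/- Let μ, ν be probability measures on [0,∞) (one may be on ℝ provided the other is on [0,∞)) and suppose the identity (μ ⊠ ν)^{⊎t} = D_{1/t}(μ^{⊎t} ⊠ ν^{⊎t}) holds for all t > 0, where ⊠ is free multiplicative convolution, ⊎ is Boolean convolution power, and D_c is dilation by c. If μ ⊎ μ = D_{2^{1+t}}(μ) and ν ⊎ ν = D_{2^{1+s}}(ν) for some s, t > 0, then (μ ⊠ ν) ⊎ (μ ⊠ ν) = D_{2^{1+s+t}}(μ ⊠ ν); that is, μ ⊠ ν is Boolean strictly stable with stability index 1/(1+s+t). -/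
open MeasureTheory Set

/-- If `μ`, `ν` (with `ν` supported on `[0,∞)`) satisfy the dilation identity
`(μ ⊠ ν)^{⊎u} = D_{1/u}(μ^{⊎u} ⊠ ν^{⊎u})` for all `u > 0`, and `μ`, `ν` are Boolean strictly
stable with indices `1/(1+t)` and `1/(1+s)` respectively, then `μ ⊠ ν` is Boolean strictly
stable with index `1/(1+s+t)`.  Here `boxtimes` is the free multiplicative convolution
(characterized by pulling dilations out multiplicatively), `boolPow μ u` is the Boolean
convolution power `μ^{⊎u}`, `uplus` is the Boolean convolution, and `D c` is the dilation
`x ↦ c x`. -/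
theorem boxtimes_of_boolean_stable_is_boolean_stable
    (boxtimes uplus : Measure ℝ → Measure ℝ → Measure ℝ)
    (boolPow : Measure ℝ → ℝ → Measure ℝ)
    (D : ℝ → Measure ℝ → Measure ℝ)
    (hD : ∀ (c : ℝ) (μ : Measure ℝ), D c μ = Measure.map (fun x => c * x) μ)
    (hpow2 : ∀ μ : Measure ℝ, boolPow μ 2 = uplus μ μ)
    (hDbox : ∀ (b c : ℝ) (μ ν : Measure ℝ), 0 < b → 0 < c →
      boxtimes (D b μ) (D c ν) = D (b * c) (boxtimes μ ν))
    (μ ν : Measure ℝ) [IsProbabilityMeasure μ] [IsProbabilityMeasure ν]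
    (hν : ν (Set.Iio 0) = 0)
    (s t : ℝ) (hs : 0 < s) (ht : 0 < t)
    (hiden : ∀ u : ℝ, 0 < u →
      boolPow (boxtimes μ ν) u = D (1 / u) (boxtimes (boolPow μ u) (boolPow ν u)))
    (hμstable : uplus μ μ = D ((2 : ℝ) ^ (1 + t)) μ)
    (hνstable : uplus ν ν = D ((2 : ℝ) ^ (1 + s)) ν) :
    uplus (boxtimes μ ν) (boxtimes μ ν) = D ((2 : ℝ) ^ (1 + s + t)) (boxtimes μ ν) := by
  have h2 := hiden 2 (by norm_num)
  rw [hpow2, hpow2, hpow2, hμstable, hνstable,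
    hDbox _ _ _ _ (Real.rpow_pos_of_pos (by norm_num) _) (Real.rpow_pos_of_pos (by norm_num) _)]
    at h2
  rw [h2, hD, hD, hD, Measure.map_map (by fun_prop) (by fun_prop)]
  congr 1
  funext x
  simp only [Function.comp_apply]
  rw [← Real.rpow_add (by norm_num : (0:ℝ) < 2)]
  have : (1:ℝ)/2 = (2:ℝ) ^ (-1 : ℝ) := by
    rw [Real.rpow_neg_one]; norm_num
  rw [this, ← mul_assoc, ← Real.rpow_add (by norm_num : (0:ℝ) < 2)]
  ring_nf
end

section
/- Let μ be a probability measure on ℝ with reciprocal Cauchy transform F_μ(z) = z - K(z) where K(z) = -e^{iπρα} z^{1-α} (principal branch on ℂ⁺), for α ∈ (0,1) and ρ ∈ [0,1]. Then μ is supported on [0,∞) if and only if ρ = 1. -/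
/-!
For `ρ = 1` and `x ≤ b < 0`, the term `e^{iπα} (x + ir)^{1-α}` lies in the closed second quadrant
and has imaginary part at most `r ‖x + ir‖^{-α}`, so `F(x + ir)` has real part `≤ b` and imaginary
part `O(r)`. Hence `-Im G(x + ir) = Im F / |F|² = O(r)`, and since the Poisson kernel is at least
`1/(2r)` on the ball of radius `r` about `x`, `μ(ball x r) = O(r²)` uniformly for `x ≤ b`; covering
an interval by `n` balls of radius `(length)/n` shows that `μ` vanishes on `(-∞, 0)`.

Conversely, if `μ` lives on `[0, ∞)` then `Im G(-1 + iε) = O(ε)`, whereas `G(-1 + iε)` tends to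
`1 / F(-1 + i0)` with `Im F(-1 + i0) = sin (π α (1 - ρ))`, which is nonzero unless `ρ = 1`.
-/

open Complex Real MeasureTheory Set Filter Topology

noncomputable def cauchyTransform (μ : Measure ℝ) (z : ℂ) : ℂ := ∫ x : ℝ, (z - (x : ℂ))⁻¹ ∂μ

section CauchyTransform

variable (μ : Measure ℝ) [IsFiniteMeasure μ] {z : ℂ}

lemma integrable_inv_sub_ofReal (hz : 0 < z.im) :
    Integrable (fun x : ℝ => (z - (x : ℂ))⁻¹) μ := by
  have hne (x : ℝ) : z - (x : ℂ) ≠ 0 := fun h => by simpa [hz.ne'] using congrArg im h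
  refine (integrable_const z.im⁻¹).mono' ?_ (Eventually.of_forall fun x => ?_)
  · exact ((continuous_const.sub continuous_ofReal).inv₀ hne).aestronglyMeasurable
  · rw [norm_inv]
    exact inv_anti₀ hz ((le_abs_self _).trans (by simpa using abs_im_le_norm (z - (x : ℂ))))

lemma im_cauchyTransform (hz : 0 < z.im) :
    (cauchyTransform μ z).im = -∫ s, z.im / ((z.re - s) ^ 2 + z.im ^ 2) ∂μ := by
  rw [cauchyTransform, ← RCLike.im_eq_complex_im, ← integral_im (integrable_inv_sub_ofReal μ hz),
    ← integral_neg]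
  refine integral_congr_ae (Eventually.of_forall fun s => ?_)
  simp [normSq_apply, neg_div, sq]

lemma measureReal_ball_le_im_cauchyTransform (hz : 0 < z.im) :
    μ.real (Metric.ball z.re z.im) ≤ 2 * z.im * -(cauchyTransform μ z).im := by
  set f := fun s : ℝ => z.im / ((z.re - s) ^ 2 + z.im ^ 2)
  have hf_int : Integrable f μ := by
    refine (integrable_inv_sub_ofReal μ hz).im.neg.congr (Eventually.of_forall fun s => ?_)
    simp [f, normSq_apply, neg_div, sq]
  have hball : Metric.ball z.re z.im ⊆ {s | (2 * z.im)⁻¹ ≤ f s} := by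
    intro s hs
    rw [Metric.mem_ball, Real.dist_eq, abs_lt] at hs
    simp only [mem_ofPred_eq, f]
    rw [inv_le_comm₀ (by positivity) (by positivity), inv_div, div_le_iff₀ hz]
    nlinarith
  have := mul_meas_ge_le_integral_of_nonneg (Eventually.of_forall fun s => by positivity) hf_int
    (2 * z.im)⁻¹
  rw [im_cauchyTransform μ hz, neg_neg]
  calc μ.real (Metric.ball z.re z.im) ≤ μ.real {s | (2 * z.im)⁻¹ ≤ f s} := measureReal_mono hball
    _ ≤ _ := by rw [← div_le_iff₀' (by positivity), div_eq_inv_mul]; exact this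

end CauchyTransform

lemma Ico_subset_biUnion_ball (a b : ℝ) {n : ℕ} (hn : 0 < n) :
    Ico a b ⊆ ⋃ k ∈ Finset.range n, Metric.ball (a + k * ((b - a) / n)) ((b - a) / n) := by
  intro y ⟨hay, hyb⟩
  have hh : 0 < (b - a) / n := div_pos (by linarith) (by exact_mod_cast hn)
  set t := (y - a) / ((b - a) / n)
  have ht : 0 ≤ t := div_nonneg (by linarith) hh.le
  have htn : t < n := by
    rw [div_lt_iff₀ hh]
    field_simp
    linarith
  simp only [mem_iUnion, Finset.mem_range, Metric.mem_ball, Real.dist_eq]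
  refine ⟨⌊t⌋₊, (Nat.floor_lt ht).2 htn, ?_⟩
  have hy : y = a + t * ((b - a) / n) := by simp only [t, div_mul_cancel₀ _ hh.ne']; ring
  rw [hy, abs_lt]
  constructor <;> nlinarith [Nat.floor_le ht, Nat.lt_floor_add_one t]

lemma measureReal_Ioo_eq_zero_of_measureReal_ball_le {μ : Measure ℝ} [IsFiniteMeasure μ]
    {a b C : ℝ} (h : ∀ x ∈ Icc a b, ∀ r > 0, μ.real (Metric.ball x r) ≤ C * r ^ 2) :
    μ.real (Ioo a b) = 0 := by
  rcases le_or_gt b a with hba | hab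
  · simp [Ioo_eq_empty_of_le hba]
  have hcover (n : ℕ) (hn : 0 < n) : μ.real (Ioo a b) ≤ C * (b - a) ^ 2 / n := by
    have hh : 0 < (b - a) / n := div_pos (by linarith) (by exact_mod_cast hn)
    calc μ.real (Ioo a b)
        ≤ μ.real (⋃ k ∈ Finset.range n, Metric.ball (a + k * ((b - a) / n)) ((b - a) / n)) :=
          measureReal_mono (Ioo_subset_Ico_self.trans (Ico_subset_biUnion_ball a b hn))
            (measure_ne_top _ _)
      _ ≤ ∑ k ∈ Finset.range n, μ.real (Metric.ball (a + k * ((b - a) / n)) ((b - a) / n)) :=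
          measureReal_biUnion_finset_le _ _
      _ ≤ ∑ k ∈ Finset.range n, C * ((b - a) / n) ^ 2 := by
          refine Finset.sum_le_sum fun k hk =>
            h _ ⟨le_add_of_nonneg_right (by positivity), ?_⟩ _ hh
          have hkn : (k : ℝ) ≤ n := by exact_mod_cast (Finset.mem_range.1 hk).le
          have hnh : (n : ℝ) * ((b - a) / n) = b - a := mul_div_cancel₀ _ (by positivity)
          nlinarith
      _ = C * (b - a) ^ 2 / n := by
          rw [Finset.sum_const, Finset.card_range, nsmul_eq_mul]
          field_simp
  refine le_antisymm (ge_of_tendsto (tendsto_const_div_atTop_nhds_zero_nat (C * (b - a) ^ 2))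
    ((eventually_gt_atTop 0).mono hcover)) measureReal_nonneg

section SecondQuadrant

variable {w : ℂ}

lemma exp_mul_cpow_one_sub_eq (α : ℝ) (hw : w ≠ 0) :
    exp (π * α * I) * w ^ ((1 : ℂ) - α) =
      exp (((1 - α) * Real.log ‖w‖ : ℝ) + (π - (1 - α) * (π - arg w) : ℝ) * I) := by
  rw [cpow_def_of_ne_zero hw, ← Complex.exp_add, Complex.log]
  congr 1
  push_cast
  ring

lemma re_exp_mul_cpow_one_sub (α : ℝ) (hw : w ≠ 0) :
    (exp (π * α * I) * w ^ ((1 : ℂ) - α)).re =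
      -(‖w‖ ^ (1 - α) * Real.cos ((1 - α) * (π - arg w))) := by
  rw [exp_mul_cpow_one_sub_eq α hw, exp_re, add_re, add_im, re_ofReal_mul, im_ofReal_mul,
    ofReal_re, ofReal_im, I_re, I_im, mul_zero, add_zero, zero_add, mul_one, Real.cos_pi_sub,
    Real.rpow_def_of_pos (norm_pos_iff.2 hw), mul_comm (Real.log _), mul_neg]

lemma im_exp_mul_cpow_one_sub (α : ℝ) (hw : w ≠ 0) :
    (exp (π * α * I) * w ^ ((1 : ℂ) - α)).im =
      ‖w‖ ^ (1 - α) * Real.sin ((1 - α) * (π - arg w)) := by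
  rw [exp_mul_cpow_one_sub_eq α hw, exp_im, add_re, add_im, re_ofReal_mul, im_ofReal_mul,
    ofReal_re, ofReal_im, I_re, I_im, mul_zero, add_zero, zero_add, mul_one, Real.sin_pi_sub,
    Real.rpow_def_of_pos (norm_pos_iff.2 hw), mul_comm (Real.log _)]

lemma pi_sub_arg_mem_Icc (hre : w.re < 0) (him : 0 ≤ w.im) : π - arg w ∈ Icc 0 (π / 2) := by
  have : π / 2 < arg w := not_le.1 fun h => (arg_le_pi_div_two_iff.1 h).elim hre.not_ge him.not_gt
  constructor <;> linarith [arg_le_pi w]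

variable {α : ℝ} (hα₀ : 0 ≤ α) (hα₁ : α ≤ 1) (hre : w.re < 0) (him : 0 ≤ w.im)
include hα₀ hα₁ hre him

lemma one_sub_mul_pi_sub_arg_mem_Icc : (1 - α) * (π - arg w) ∈ Icc 0 (π / 2) := by
  obtain ⟨h₀, h₁⟩ := pi_sub_arg_mem_Icc hre him
  constructor <;> nlinarith

lemma re_add_exp_mul_cpow_le : (w + exp (π * α * I) * w ^ ((1 : ℂ) - α)).re ≤ w.re := by
  have hw : w ≠ 0 := fun h => by simp [h] at hre
  obtain ⟨h₀, h₁⟩ := one_sub_mul_pi_sub_arg_mem_Icc hα₀ hα₁ hre him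
  rw [add_re, re_exp_mul_cpow_one_sub α hw, add_neg_le_iff_le_add, le_add_iff_nonneg_right]
  exact mul_nonneg (by positivity) (Real.cos_nonneg_of_mem_Icc ⟨by linarith, h₁⟩)

lemma im_add_exp_mul_cpow_mem_Icc : (w + exp (π * α * I) * w ^ ((1 : ℂ) - α)).im ∈
    Icc w.im (w.im * (1 + (-w.re) ^ (-α))) := by
  have hw : w ≠ 0 := fun h => by simp [h] at hre
  have hnorm : 0 < ‖w‖ := norm_pos_iff.2 hw
  obtain ⟨h₀, h₁⟩ := one_sub_mul_pi_sub_arg_mem_Icc hα₀ hα₁ hre him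
  obtain ⟨h₀', h₁'⟩ := pi_sub_arg_mem_Icc hre him
  have hsin : Real.sin ((1 - α) * (π - arg w)) ≤ w.im / ‖w‖ := by
    rw [← sin_arg, ← Real.sin_pi_sub (arg w)]
    exact Real.sin_le_sin_of_le_of_le_pi_div_two (by linarith) h₁' (by nlinarith)
  rw [add_im, im_exp_mul_cpow_one_sub α hw]
  refine ⟨le_add_of_nonneg_right (mul_nonneg (by positivity)
    (Real.sin_nonneg_of_nonneg_of_le_pi h₀ (by linarith))), ?_⟩
  calc w.im + ‖w‖ ^ (1 - α) * Real.sin ((1 - α) * (π - arg w))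
      ≤ w.im + ‖w‖ ^ (1 - α) * (w.im / ‖w‖) := by gcongr
    _ = w.im * (1 + ‖w‖ ^ (-α)) := by
        rw [sub_eq_add_neg, Real.rpow_add hnorm, Real.rpow_one]
        field_simp
    _ ≤ w.im * (1 + (-w.re) ^ (-α)) := by
        refine mul_le_mul_of_nonneg_left (add_le_add_right ?_ 1) him
        exact Real.rpow_le_rpow_of_nonpos (by linarith) ((neg_le_abs _).trans (abs_re_le_norm w))
          (neg_nonpos.2 hα₀)

end SecondQuadrant

lemma continuousWithinAt_cpow_const_of_re_neg_of_im_zero {x : ℂ} (hre : x.re < 0)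
    (him : x.im = 0) (s : ℂ) : ContinuousWithinAt (fun z => z ^ s) {z | 0 ≤ z.im} x := by
  have hx : x ≠ 0 := fun h => by simp [h] at hre
  have hexp : ContinuousWithinAt (fun z => exp (Complex.log z * s)) {z | 0 ≤ z.im} x :=
    continuous_exp.continuousAt.comp_continuousWithinAt
      ((continuousWithinAt_log_of_re_neg_of_im_zero hre him).mul continuousWithinAt_const)
  refine hexp.congr_of_eventuallyEq ?_ (cpow_def_of_ne_zero hx s)
  filter_upwards [nhdsWithin_le_nhds (isOpen_ne.mem_nhds hx)] with z hz
  exact cpow_def_of_ne_zero hz s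

lemma tendsto_neg_one_add_mul_I :
    Tendsto (fun ε : ℝ => -1 + ε * I) (𝓝[>] 0) (𝓝[{z | 0 ≤ z.im}] (-1)) := by
  refine tendsto_nhdsWithin_iff.2 ⟨?_, eventually_nhdsWithin_of_forall fun ε hε => ?_⟩
  · have : Continuous fun ε : ℝ => -1 + ε * I := by fun_prop
    exact tendsto_nhdsWithin_of_tendsto_nhds (by simpa using this.tendsto 0)
  · simpa using le_of_lt hε

lemma tendsto_im_cauchyTransform_of_measure_Iio_eq_zero (μ : Measure ℝ) [IsProbabilityMeasure μ]
    (h : μ (Iio 0) = 0) :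
    Tendsto (fun ε : ℝ => (cauchyTransform μ (-1 + ε * I)).im) (𝓝[>] 0) (𝓝 0) := by
  have hnonneg : ∀ᵐ s ∂μ, 0 ≤ s :=
    ae_iff.2 (measure_mono_null (fun s (hs : ¬0 ≤ s) => not_le.1 hs) h)
  have hbound (ε : ℝ) (hε : 0 < ε) :
      (cauchyTransform μ (-1 + ε * I)).im ∈ Icc (-ε) 0 := by
    rw [im_cauchyTransform μ (by simpa using hε)]
    simp only [add_re, neg_re, one_re, re_ofReal_mul, I_re, mul_zero, add_zero, add_im, neg_im,
      one_im, im_ofReal_mul, I_im, mul_one, neg_zero, zero_add]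
    refine ⟨neg_le_neg ?_, neg_nonpos.2 (integral_nonneg fun s => by positivity)⟩
    calc ∫ s, ε / ((-1 - s) ^ 2 + ε ^ 2) ∂μ ≤ ∫ _s, ε ∂μ := by
          refine integral_mono_of_nonneg (.of_forall fun s => by positivity) (integrable_const ε) ?_
          filter_upwards [hnonneg] with s hs
          rw [div_le_iff₀ (by positivity)]
          nlinarith [mul_nonneg hε.le (show 0 ≤ (-1 - s) ^ 2 - 1 + ε ^ 2 by nlinarith)]
      _ = ε := by simp
  have hid : Tendsto (fun ε : ℝ => ε) (𝓝[>] 0) (𝓝 0) :=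
    tendsto_nhdsWithin_of_tendsto_nhds tendsto_id
  refine tendsto_of_tendsto_of_tendsto_of_le_of_le' (by simpa using hid.neg) tendsto_const_nhds
    ?_ ?_ <;> filter_upwards [self_mem_nhdsWithin] with ε hε
  exacts [(hbound ε hε).1, (hbound ε hε).2]

lemma im_neg_one_add_exp_mul_neg_one_cpow (α ρ : ℝ) :
    (-1 + exp (π * ρ * α * I) * (-1) ^ ((1 : ℂ) - α)).im = Real.sin (π * α * (1 - ρ)) := by
  rw [cpow_def_of_ne_zero (by norm_num), log_neg_one, ← Complex.exp_add]
  have : (π * ρ * α * I + π * I * (1 - α) : ℂ) = ((π - π * α * (1 - ρ) : ℝ) : ℂ) * I := by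
    push_cast; ring
  rw [this, add_im, exp_ofReal_mul_I_im, Real.sin_pi_sub]
  simp

lemma neg_im_inv_le_of_re_le {F : ℂ} {b c : ℝ} (hb : b < 0) (hre : F.re ≤ b) (him₀ : 0 ≤ F.im)
    (him : F.im ≤ c) : -(F⁻¹).im ≤ c / b ^ 2 := by
  rw [inv_im, neg_div, neg_neg]
  refine div_le_div₀ (him₀.trans him) him (by nlinarith) ?_
  rw [normSq_apply]
  nlinarith [mul_self_nonneg F.im]

section PositiveBooleanStable

variable {α : ℝ} (hα₀ : 0 ≤ α) (hα₁ : α ≤ 1) (μ : Measure ℝ) [IsFiniteMeasure μ]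
  (hF : ∀ z : ℂ, 0 < z.im → (cauchyTransform μ z)⁻¹ = z + exp (π * α * I) * z ^ ((1 : ℂ) - α))
include hα₀ hα₁ hF

lemma measureReal_ball_le_of_inv_cauchyTransform_eq {b x r : ℝ} (hb : b < 0) (hx : x ≤ b)
    (hr : 0 < r) : μ.real (Metric.ball x r) ≤ 2 * (1 + (-b) ^ (-α)) / b ^ 2 * r ^ 2 := by
  set w : ℂ := x + r * I
  have hwre : w.re = x := by simp [w]
  have hwim : w.im = r := by simp [w]
  have hball := measureReal_ball_le_im_cauchyTransform μ (z := w) (by rwa [hwim])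
  rw [hwre, hwim, ← inv_inv (cauchyTransform μ w), hF w (by rwa [hwim])] at hball
  obtain ⟨him₀, him⟩ := im_add_exp_mul_cpow_mem_Icc (w := w) hα₀ hα₁ (by linarith) (by linarith)
  rw [hwim] at him₀
  rw [hwre, hwim] at him
  have hpow : (-x) ^ (-α) ≤ (-b) ^ (-α) :=
    Real.rpow_le_rpow_of_nonpos (by linarith) (by linarith) (neg_nonpos.2 hα₀)
  have hinv := neg_im_inv_le_of_re_le hb
    ((re_add_exp_mul_cpow_le (w := w) hα₀ hα₁ (by linarith) (by linarith)).trans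
      (hwre.trans_le hx))
    (hr.le.trans him₀) (him.trans (mul_le_mul_of_nonneg_left (add_le_add_right hpow 1) hr.le))
  calc μ.real (Metric.ball x r) ≤ 2 * r * (r * (1 + (-b) ^ (-α)) / b ^ 2) :=
        hball.trans (mul_le_mul_of_nonneg_left hinv (by positivity))
    _ = 2 * (1 + (-b) ^ (-α)) / b ^ 2 * r ^ 2 := by ring

lemma measure_Iio_zero_eq_zero_of_inv_cauchyTransform_eq : μ (Iio 0) = 0 := by
  refine measure_null_of_locally_null _ fun x (hx : x < 0) => ⟨Ioo (2 * x) (x / 2), ?_, ?_⟩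
  · exact mem_nhdsWithin_of_mem_nhds (Ioo_mem_nhds (by linarith) (by linarith))
  · rw [← measureReal_eq_zero_iff]
    exact measureReal_Ioo_eq_zero_of_measureReal_ball_le fun y hy r hr =>
      measureReal_ball_le_of_inv_cauchyTransform_eq hα₀ hα₁ μ hF (by linarith) hy.2 hr

end PositiveBooleanStable

lemma rho_eq_one_of_measure_Iio_eq_zero {α ρ : ℝ} (hα : 0 < α) (hα' : α < 1)
    (hρ : ρ ∈ Icc (0 : ℝ) 1) (μ : Measure ℝ) [IsProbabilityMeasure μ]
    (hF : ∀ z : ℂ, 0 < z.im →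
      (cauchyTransform μ z)⁻¹ = z + exp (π * ρ * α * I) * z ^ ((1 : ℂ) - α))
    (h0 : μ (Iio 0) = 0) : ρ = 1 := by
  by_contra hρ1
  have hρ' : ρ < 1 := lt_of_le_of_ne hρ.2 hρ1
  set F₀ := -1 + exp (π * ρ * α * I) * (-1) ^ ((1 : ℂ) - α)
  have hF₀im : 0 < F₀.im := by
    rw [im_neg_one_add_exp_mul_neg_one_cpow]
    have h₀ : 0 < α * (1 - ρ) := mul_pos hα (by linarith)
    have h₁ : α * (1 - ρ) < 1 := by nlinarith [hρ.1]
    exact Real.sin_pos_of_pos_of_lt_pi (by nlinarith [Real.pi_pos]) (by nlinarith [Real.pi_pos])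
  have hF₀ : F₀ ≠ 0 := fun h => by simp [h] at hF₀im
  have hF_tendsto : Tendsto
      (fun ε : ℝ => (-1 + ε * I) + exp (π * ρ * α * I) * (-1 + ε * I) ^ ((1 : ℂ) - α))
      (𝓝[>] 0) (𝓝 F₀) :=
    (tendsto_nhdsWithin_iff.1 tendsto_neg_one_add_mul_I).1.add (tendsto_const_nhds.mul
      ((continuousWithinAt_cpow_const_of_re_neg_of_im_zero (by simp) (by simp) _).tendsto.comp
        tendsto_neg_one_add_mul_I))
  have hlim : Tendsto (fun ε : ℝ => (cauchyTransform μ (-1 + ε * I)).im) (𝓝[>] 0)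
      (𝓝 (F₀⁻¹).im) := by
    refine ((continuous_im.tendsto _).comp (hF_tendsto.inv₀ hF₀)).congr' ?_
    filter_upwards [self_mem_nhdsWithin] with ε (hε : 0 < ε)
    rw [Function.comp_apply, ← hF _ (by simpa using hε), inv_inv]
  have h := tendsto_nhds_unique hlim (tendsto_im_cauchyTransform_of_measure_Iio_eq_zero μ h0)
  rw [inv_im, neg_div, neg_eq_zero, div_eq_zero_iff] at h
  exact h.elim hF₀im.ne' (normSq_pos.2 hF₀).ne'

/-- The Boolean stable law `b_α^ρ` (the probability measure whose reciprocal Cauchy transform is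
`F(z) = z - K(z)` with `K(z) = -e^{iπρα} z^{1-α}`, principal branch on `ℂ⁺`) is supported on
`[0,∞)` if and only if `ρ = 1`, for `α ∈ (0,1)` and `ρ ∈ [0,1]`. -/
theorem boolean_stable_law_positive_iff_rho_eq_one
    (α ρ : ℝ) (hα : 0 < α) (hα' : α < 1) (hρ : ρ ∈ Set.Icc (0 : ℝ) 1)
    (μ : Measure ℝ) [IsProbabilityMeasure μ]
    (hF : ∀ z : ℂ, 0 < z.im →
      (∫ x : ℝ, (z - (x : ℂ))⁻¹ ∂μ)⁻¹ =
        z + Complex.exp ((π * ρ * α) * Complex.I) * z ^ ((1 : ℂ) - (α : ℂ))) :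
    μ (Set.Iio 0) = 0 ↔ ρ = 1 := by
  constructor
  · exact rho_eq_one_of_measure_Iio_eq_zero hα hα' hρ μ hF
  · rintro rfl
    refine measure_Iio_zero_eq_zero_of_inv_cauchyTransform_eq hα.le hα'.le μ fun z hz => ?_
    simpa [cauchyTransform] using hF z hz
end
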